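/- Assume σ⋆ ∈ C^{0,α}(Ω̄) and that the data is admissible, i.e. the potential w has only finitely many critical points p₁,…,p_n in Ω, all isolated, and every gradient-flow trajectory X′(t) = −∇w(X(t)) starting in Ω remains in Ω and converges as t → ∞ to one of the pᵢ. If U ∈ H¹(Ω) satisfies F·∇U = 0 in Ω, ∂U/∂ν = 0 on ∂Ω, and ∫_Ω U = 0, where F = (−J₂, J₁) = −∇w is the rotation of J by π/2, then U = 0 in Ω. -/

import Mathlib

noncomputable section
open MeasureTheory Set Filter Topology

/-- The plane ℝ². -/
abbrev Pt : Type := EuclideanSpace ℝ (Fin 2)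

/-- Standard basis vectors of ℝ². -/
def ee (i : Fin 2) : Pt := EuclideanSpace.single i 1

/-- Partial derivative in direction `i`. -/
def pd (i : Fin 2) (f : Pt → ℝ) (x : Pt) : ℝ := fderiv ℝ f x (ee i)

/-- Divergence of a planar vector field. -/
def vdiv (A : Pt → Pt) (x : Pt) : ℝ := ∑ i, fderiv ℝ A x (ee i) i

/-- 2D curl of a scalar function: `curl w = (−∂₂w, ∂₁w)`. -/
def scurl (w : Pt → ℝ) (x : Pt) : Pt :=
  (EuclideanSpace.equiv (Fin 2) ℝ).symm ![-(pd 1 w x), pd 0 w x]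

/-- 2D curl of a planar vector field: `curl f = −∂₂f₁ + ∂₁f₂`. -/
def vcurl (f : Pt → Pt) (x : Pt) : ℝ :=
  -(fderiv ℝ f x (ee 1) 0) + fderiv ℝ f x (ee 0) 1

/-- Rotation of a planar vector field by π/2: `rot J = (−J₂, J₁)`. -/
def rot (J : Pt → Pt) (x : Pt) : Pt :=
  (EuclideanSpace.equiv (Fin 2) ℝ).symm ![-(J x 1), J x 0]

/-- Cross product of planar vectors: `u × v = u₁v₂ − u₂v₁`. -/
def cross2 (u v : Pt) : ℝ := u 0 * v 1 - u 1 * v 0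

/-- `f ∈ L²(Ω)`. -/
def MemL2 {E : Type*} [NormedAddCommGroup E] (Ω : Set Pt) (f : Pt → E) : Prop :=
  MemLp f 2 (volume.restrict Ω)

/-- `f ∈ H¹(Ω)`: `f` and its gradient are square integrable on `Ω`. -/
def MemH1 (Ω : Set Pt) (f : Pt → ℝ) : Prop :=
  MemL2 Ω f ∧ MemL2 Ω (fun x => gradient f x)

/-- Smooth test function compactly supported in `Ω`. -/
def TestCc (Ω : Set Pt) (φ : Pt → ℝ) : Prop :=
  ContDiff ℝ (⊤ : ℕ∞) φ ∧ HasCompactSupport φ ∧ tsupport φ ⊆ Ω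

/-- `σ ∈ L^∞_{a,b}(Ω)`: `a < σ < b` on `Ω'` and `σ ≡ σ₀` on `Ω ∖ closure Ω'`. -/
def MemLab (Ω Ω' : Set Pt) (a b σ₀ : ℝ) (f : Pt → ℝ) : Prop :=
  (∀ x ∈ Ω', a < f x ∧ f x < b) ∧ ∀ x ∈ Ω \ closure Ω', f x = σ₀

/-- Weak solution of the Neumann problem `∇·(σ∇V) = −∇·(σA₁)` in `Ω`,
`σ ∂V/∂ν = −σ A₁·ν` on `∂Ω`, `∫_Ω V = 0`.  (Testing against all smooth functions
encodes both the interior equation and the Neumann boundary condition.) -/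
def IsCondSol (Ω : Set Pt) (σ : Pt → ℝ) (A₁ : Pt → Pt) (V : Pt → ℝ) : Prop :=
  (∫ x in Ω, V x) = 0 ∧
  ∀ φ : Pt → ℝ, ContDiff ℝ (⊤ : ℕ∞) φ →
    (∫ x in Ω, σ x * (inner ℝ (gradient V x + A₁ x) (gradient φ x) : ℝ)) = 0

lemma inner_grad (f : Pt → ℝ) (x v : Pt) : (inner ℝ (gradient f x) v : ℝ) = fderiv ℝ f x v := by
  rw [gradient]; exact InnerProductSpace.toDual_symm_apply

lemma grad_apply (f : Pt → ℝ) (x : Pt) (i : Fin 2) : gradient f x i = fderiv ℝ f x (ee i) := by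
  rw [← inner_grad, ee, EuclideanSpace.inner_single_right]; simp

lemma rot_scurl (w : Pt → ℝ) (J : Pt → Pt) (x : Pt) (h : J x = scurl w x) :
    rot J x = -(gradient w x) := by
  ext i
  fin_cases i <;> simp [rot, h, scurl, grad_apply, pd]

/-- Uniqueness for the transport equation: if the data is admissible
(the stream function `w` has finitely many, isolated critical points and every gradient-flow
trajectory of `−∇w` starting in `Ω` stays in `Ω` and converges to one of them), then any
`U ∈ H¹(Ω)` with `F·∇U = 0` in `Ω`, `∂U/∂ν = 0` on `∂Ω` and `∫_Ω U = 0` vanishes in `Ω`,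
where `F = (−J₂, J₁) = −∇w`. -/
theorem transport_equation_uniqueness
    (Ω : Set Pt) (hΩo : IsOpen Ω) (hΩb : Bornology.IsBounded Ω)
    (hΩconv : Convex ℝ Ω) (hΩne : Ω.Nonempty)
    (α Ch : NNReal) (hα : 0 < α) (hα1 : (α : ℝ) ≤ 1)
    (σstar : Pt → ℝ) (hσreg : HolderOnWith Ch α σstar (closure Ω))
    (A₁ : Pt → Pt) (hA₁ : ContDiff ℝ (⊤ : ℕ∞) A₁) (hA₁div : ∀ x, vdiv A₁ x = 0)
    (Vstar : Pt → ℝ) (hV : MemH1 Ω Vstar) (hVsol : IsCondSol Ω σstar A₁ Vstar)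
    (Jd : Pt → Pt) (hJd : ∀ x, Jd x = σstar x • (gradient Vstar x + A₁ x))
    -- the stream function w : J = curl w in Ω, w = 0 on ∂Ω :
    (w : Pt → ℝ) (hwreg : ContDiffOn ℝ 1 w Ω) (hw0 : EqOn w 0 (frontier Ω))
    (hwJ : ∀ x ∈ Ω, Jd x = scurl w x)
    -- admissibility: finitely many isolated critical points of w in Ω :
    (P : Finset Pt) (hPsub : ↑P ⊆ Ω)
    (hcrit : ∀ x ∈ Ω, gradient w x = 0 ↔ x ∈ P)
    -- admissibility: gradient-flow trajectories exist, stay in Ω and converge to some pᵢ :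
    (hflow : ∀ x₀ ∈ Ω, ∃ X : ℝ → Pt, X 0 = x₀ ∧
      (∀ t : ℝ, HasDerivAt X (-(gradient w (X t))) t) ∧
      (∀ t : ℝ, 0 ≤ t → X t ∈ Ω) ∧ ∃ p ∈ P, Tendsto X atTop (nhds p))
    -- the outward unit normal on ∂Ω :
    (ν : Pt → Pt)
    (U : Pt → ℝ) (hUH1 : MemH1 Ω U) (hUdiff : DifferentiableOn ℝ U Ω)
    (hUtransport : ∀ x ∈ Ω, (inner ℝ (rot Jd x) (gradient U x) : ℝ) = 0)
    (hUneumann : ∀ x ∈ frontier Ω, (inner ℝ (gradient U x) (ν x) : ℝ) = 0)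
    (hUmean : (∫ x in Ω, U x) = 0) :
    ∀ x ∈ Ω, U x = 0 := by
  have hUcont : ContinuousOn U Ω := hUdiff.continuousOn
  -- the transport equation in terms of w
  have hkey : ∀ x ∈ Ω, (inner ℝ (gradient U x) (gradient w x) : ℝ) = 0 := by
    intro x hx
    have h1 := hUtransport x hx
    rw [rot_scurl w Jd x (hwJ x hx), inner_neg_left] at h1
    have : (inner ℝ (gradient w x) (gradient U x) : ℝ) = 0 := by linarith
    rw [real_inner_comm] at this; exact this
  -- each point has the same value as some critical point
  have hval : ∀ x₀ ∈ Ω, ∃ p ∈ P, U x₀ = U p := by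
    intro x₀ hx₀
    obtain ⟨X, hX0, hXder, hXin, p, hp, hXp⟩ := hflow x₀ hx₀
    refine ⟨p, hp, ?_⟩
    have hg : ∀ t ∈ Ici (0:ℝ), HasDerivAt (U ∘ X) 0 t := by
      intro t ht
      have hmem : X t ∈ Ω := hXin t ht
      have hdU : DifferentiableAt ℝ U (X t) := hUdiff.differentiableAt (hΩo.mem_nhds hmem)
      have := hdU.hasFDerivAt.comp_hasDerivAt t (hXder t)
      have hz : fderiv ℝ U (X t) (-(gradient w (X t))) = 0 := by
        rw [← inner_grad, inner_neg_right, hkey (X t) hmem, neg_zero]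
      rwa [hz] at this
    have hconst : ∀ t : ℝ, 0 ≤ t → U (X t) = U x₀ := by
      intro T hT
      have hcont : ContinuousOn (U ∘ X) (Icc 0 T) := fun t ht =>
        ((hg t (mem_Ici.2 ht.1)).continuousAt).continuousWithinAt
      have hderiv : ∀ t ∈ Ico (0:ℝ) T, HasDerivWithinAt (U ∘ X) 0 (Ici t) t := fun t ht =>
        (hg t (mem_Ici.2 ht.1)).hasDerivWithinAt
      have := constant_of_has_deriv_right_zero hcont hderiv T (by constructor <;> simp [hT])
      simpa [hX0] using this
    have hlim : Tendsto (fun t => U (X t)) atTop (nhds (U p)) :=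
      ((hUcont.continuousAt (hΩo.mem_nhds (hPsub hp))).tendsto).comp hXp
    have hlim' : Tendsto (fun t => U (X t)) atTop (nhds (U x₀)) := by
      refine Tendsto.congr' ?_ tendsto_const_nhds
      filter_upwards [eventually_ge_atTop (0:ℝ)] with t ht using (hconst t ht).symm
    exact tendsto_nhds_unique hlim' hlim
  -- U takes finitely many values on Ω; by connectedness it is constant
  have himg : U '' Ω ⊆ U '' (P : Set Pt) := by
    rintro _ ⟨x, hx, rfl⟩
    obtain ⟨p, hp, hpe⟩ := hval x hx
    exact ⟨p, hp, hpe.symm⟩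
  have hfin : (U '' Ω).Finite := (P.finite_toSet.image U).subset himg
  have hconn : IsPreconnected (U '' Ω) := (hΩconv.isPreconnected).image U hUcont
  have hsub : (U '' Ω).Subsingleton := by
    intro a ha b hb
    by_contra hne
    rcases lt_or_gt_of_ne hne with hab | hab
    · exact (Set.Icc_infinite hab).mono (hconn.ordConnected.out ha hb) hfin
    · exact (Set.Icc_infinite hab).mono (hconn.ordConnected.out hb ha) hfin
  -- conclude from the mean-zero condition
  intro x hx
  have hEq : EqOn U (fun _ => U x) Ω := fun y hy =>
    hsub (mem_image_of_mem U hy) (mem_image_of_mem U hx)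
  have hint : (∫ y in Ω, U y) = (volume Ω).toReal • U x := by
    rw [setIntegral_congr_fun hΩo.measurableSet hEq, setIntegral_const, Measure.real]
  rw [hUmean] at hint
  have hpos : 0 < (volume Ω).toReal :=
    ENNReal.toReal_pos (hΩo.measure_pos volume hΩne).ne' hΩb.measure_lt_top.ne
  have h2 := hint.symm
  rw [smul_eq_mul] at h2
  rcases mul_eq_zero.1 h2 with h | h
  · exact absurd h hpos.ne'
  · exact h
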